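/- Let a and b be integers such that the polynomial P(x) = x⁴ + a x³ + b x² + a x + 1 is irreducible over ℚ and none of Δ₁ = a² − 4(b − 2), Δ₂ = (b + 2)² − 4a², and the product Δ₁Δ₂ is a perfect square. Then: (i) the splitting field K of P over ℚ has degree [K : ℚ] = 8 and Gal(K/ℚ) is isomorphic to the dihedral group of order 8; (ii) K contains exactly three quadratic subfields, namely ℚ(√Δ₁), ℚ(√Δ₂) and ℚ(√(Δ₁Δ₂)); and (iii) every intermediate field L with ℚ ⊊ L ⊆ K contains one of these three quadratic fields. -/

import Mathlib

/-!
For a root `r` of `P`, `y = r + r⁻¹` and `y' = -a - y` are the roots of `Y ^ 2 + a Y + b - 2`, so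
`s = y - y'` is a square root of `Δ₁`, and the roots of `P` are `(y ± t) / 2` and `(y' ± t') / 2`,
where `t ^ 2 = y ^ 2 - 4` and `t' ^ 2 = y' ^ 2 - 4` are conjugate over `ℚ(s)` and `(t t') ^ 2 = Δ₂`.
So `K` is the tower `ℚ ⊂ ℚ(s) ⊂ ℚ(s, t) ⊂ ℚ(s, t, t')` of quadratic steps, each of them proper:
`s ∉ ℚ` as `Δ₁` is not a square, `t ∉ ℚ(s)` as `r` has degree `4`, and `t' ∉ ℚ(s, t)` since
otherwise a norm computation makes `Δ₂` or `Δ₁Δ₂` a square. Hence `[K : ℚ] = 8`. Going down the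
tower, an element of `K` whose square is rational is a rational multiple of `1`, `s`, `t t'` or
`s t t'`, which gives the three quadratic subfields. The Galois group, of order `8` inside `S₄`,
is a Sylow `2`-subgroup of `S₄` like `D₄`, hence isomorphic to it; and a subfield `L ≠ ℚ` is fixed
by a proper subgroup, which lies in a subgroup of index `2` whose fixed field is quadratic and
inside `L`.
-/

open Polynomial IntermediateField

theorem two_ne_zero_of_algebra {F : Type*} (E : Type*) [Field F] [Field E] [Algebra F E]
    [NeZero (2 : E)] : (2 : F) ≠ 0 :=
  fun h => two_ne_zero (α := E) (by rw [← map_ofNat (algebraMap F E) 2, h, map_zero])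

namespace IntermediateField

variable {F E : Type*} [Field F] [Field E] [Algebra F E]

theorem adjoin_simple_add_algebraMap (x : E) (c : F) : F⟮x + algebraMap F E c⟯ = F⟮x⟯ := by
  refine le_antisymm (adjoin_simple_le_iff.mpr ?_) (adjoin_simple_le_iff.mpr ?_)
  · exact add_mem (mem_adjoin_simple_self F x) (algebraMap_mem _ c)
  · simpa using sub_mem (mem_adjoin_simple_self F (x + algebraMap F E c)) (algebraMap_mem _ c)

theorem adjoin_simple_algebraMap_mul {d : F} (hd : d ≠ 0) (x : E) :
    F⟮algebraMap F E d * x⟯ = F⟮x⟯ := by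
  refine le_antisymm (adjoin_simple_le_iff.mpr ?_) (adjoin_simple_le_iff.mpr ?_)
  · exact mul_mem (algebraMap_mem _ d) (mem_adjoin_simple_self F x)
  · have := mul_mem (algebraMap_mem F⟮algebraMap F E d * x⟯ d⁻¹)
      (mem_adjoin_simple_self F (algebraMap F E d * x))
    rwa [← mul_assoc, ← map_mul, inv_mul_cancel₀ hd, map_one, one_mul] at this

theorem mem_bot_iff_mem {L : IntermediateField F E} {x : E} :
    x ∈ (⊥ : IntermediateField L E) ↔ x ∈ L := by
  rw [← mem_restrictScalars F, restrictScalars_bot_eq_self]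

theorem mem_of_mem_base {L : IntermediateField F E} (M : IntermediateField L E) {x : E}
    (hx : x ∈ L) : x ∈ M :=
  bot_le (a := M) (mem_bot_iff_mem.mpr hx)

variable {t : E} {m : F}

theorem notMem_bot_of_sq_eq (htm : t ^ 2 = algebraMap F E m) (hm : ¬IsSquare m) :
    t ∉ (⊥ : IntermediateField F E) := by
  intro h
  obtain ⟨c, hc⟩ := mem_bot.mp h
  exact hm ⟨c, (algebraMap F E).injective (by rw [map_mul, ← sq, hc, htm])⟩

theorem algebraMap_add_mul_mem_adjoin_simple (c d : F) :
    algebraMap F E c + algebraMap F E d * t ∈ F⟮t⟯ :=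
  add_mem (algebraMap_mem _ c) (mul_mem (algebraMap_mem _ d) (mem_adjoin_simple_self F t))

theorem aeval_X_pow_two_sub_C (htm : t ^ 2 = algebraMap F E m) : aeval t (X ^ 2 - C m) = 0 := by
  simp [htm]

theorem isIntegral_of_sq_eq (htm : t ^ 2 = algebraMap F E m) : IsIntegral F t :=
  ⟨_, monic_X_pow_sub_C m two_ne_zero, by simpa using aeval_X_pow_two_sub_C htm⟩

theorem finrank_adjoin_simple_le_two (htm : t ^ 2 = algebraMap F E m) :
    Module.finrank F F⟮t⟯ ≤ 2 := by
  rw [adjoin.finrank (isIntegral_of_sq_eq htm)]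
  simpa [natDegree_X_pow_sub_C] using natDegree_le_of_dvd
    (minpoly.dvd F t (aeval_X_pow_two_sub_C htm)) (X_pow_sub_C_ne_zero two_pos m)

theorem finrank_adjoin_simple_eq_two (ht : t ∉ (⊥ : IntermediateField F E))
    (htm : t ^ 2 = algebraMap F E m) : Module.finrank F F⟮t⟯ = 2 := by
  refine le_antisymm (finrank_adjoin_simple_le_two htm) ?_
  rw [adjoin.finrank (isIntegral_of_sq_eq htm)]
  exact (minpoly.two_le_natDegree_iff (isIntegral_of_sq_eq htm)).mpr fun h => ht (mem_bot.mpr h)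

theorem algebraMap_add_mul_eq_iff (ht : t ∉ (⊥ : IntermediateField F E)) {c d c' d' : F} :
    algebraMap F E c + algebraMap F E d * t = algebraMap F E c' + algebraMap F E d' * t ↔
      c = c' ∧ d = d' := by
  refine ⟨fun h => ?_, by rintro ⟨rfl, rfl⟩; rfl⟩
  obtain rfl : d = d' := by
    by_contra hne
    have hne' : algebraMap F E d - algebraMap F E d' ≠ 0 := by
      rwa [← map_sub, _root_.map_ne_zero, sub_ne_zero]
    refine ht (mem_bot.mpr ⟨(c' - c) / (d - d'), ?_⟩)
    rw [map_div₀, map_sub, map_sub, div_eq_iff hne']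
    linear_combination -h
  exact ⟨(algebraMap F E).injective (add_right_cancel h), rfl⟩

theorem exists_eq_algebraMap_add_mul (htm : t ^ 2 = algebraMap F E m) {x : E} (hx : x ∈ F⟮t⟯) :
    ∃ c d : F, x = algebraMap F E c + algebraMap F E d * t := by
  rw [← mem_toSubalgebra,
    adjoin_simple_toSubalgebra_of_isAlgebraic (isIntegral_of_sq_eq htm).isAlgebraic] at hx
  induction hx using Algebra.adjoin_induction with
  | mem x hx => exact ⟨0, 1, by simp [Set.mem_singleton_iff.mp hx]⟩
  | algebraMap c => exact ⟨c, 0, by simp⟩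
  | add x y _ _ hx hy =>
    obtain ⟨c, d, rfl⟩ := hx
    obtain ⟨c', d', rfl⟩ := hy
    exact ⟨c + c', d + d', by simp only [map_add]; ring⟩
  | mul x y _ _ hx hy =>
    obtain ⟨c, d, rfl⟩ := hx
    obtain ⟨c', d', rfl⟩ := hy
    refine ⟨c * c' + d * d' * m, c * d' + d * c', ?_⟩
    simp only [map_add, map_mul]
    linear_combination (algebraMap F E d * algebraMap F E d') * htm

theorem mem_bot_or_exists_eq_mul_of_sq_mem_bot [NeZero (2 : E)]
    (ht : t ∉ (⊥ : IntermediateField F E)) (htm : t ^ 2 = algebraMap F E m) {x : E} (hx : x ∈ F⟮t⟯)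
    (hx2 : x ^ 2 ∈ (⊥ : IntermediateField F E)) :
    x ∈ (⊥ : IntermediateField F E) ∨ ∃ d : F, x = algebraMap F E d * t := by
  obtain ⟨c, d, rfl⟩ := exists_eq_algebraMap_add_mul htm hx
  obtain ⟨q, hq⟩ := mem_bot.mp hx2
  have hcoeff : algebraMap F E (c ^ 2 + d ^ 2 * m) + algebraMap F E (2 * c * d) * t =
      algebraMap F E q + algebraMap F E 0 * t := by
    simp only [map_add, map_mul, map_pow, map_ofNat, map_zero, hq]
    linear_combination -(algebraMap F E d) ^ 2 * htm
  have hcd : 2 * c * d = 0 := ((algebraMap_add_mul_eq_iff ht).mp hcoeff).2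
  rcases mul_eq_zero.mp hcd with hc | rfl
  · obtain rfl := (mul_eq_zero.mp hc).resolve_left (two_ne_zero_of_algebra E)
    exact Or.inr ⟨d, by simp⟩
  · exact Or.inl (by simp)

theorem isSquare_or_isSquare_mul_of_mem_adjoin_simple [NeZero (2 : E)]
    (ht : t ∉ (⊥ : IntermediateField F E)) (htm : t ^ 2 = algebraMap F E m) {x : E}
    (hx : x ∈ F⟮t⟯) {m' : F} (hx2 : x ^ 2 = algebraMap F E m') :
    IsSquare m' ∨ IsSquare (m * m') := by
  rcases mem_bot_or_exists_eq_mul_of_sq_mem_bot ht htm hx (hx2 ▸ algebraMap_mem _ m') with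
    hx | ⟨d, rfl⟩
  · obtain ⟨c, rfl⟩ := mem_bot.mp hx
    refine Or.inl ⟨c, (algebraMap F E).injective ?_⟩
    rw [← hx2, map_mul, sq]
  · refine Or.inr ⟨d * m, (algebraMap F E).injective ?_⟩
    rw [map_mul, ← hx2, mul_pow, htm]
    simp only [map_mul]; ring

theorem eq_zero_of_sq_sub_sq_mul_eq_zero (ht : t ∉ (⊥ : IntermediateField F E))
    (htm : t ^ 2 = algebraMap F E m) {c d : F} (h : c ^ 2 - d ^ 2 * m = 0) : c = 0 ∧ d = 0 := by
  obtain rfl : d = 0 := by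
    by_contra hd
    have hcd : (c / d) ^ 2 = m := by
      field_simp
      linear_combination h
    have hfac : (t - algebraMap F E (c / d)) * (t + algebraMap F E (c / d)) = 0 := by
      linear_combination htm - congrArg (algebraMap F E) hcd + map_pow (algebraMap F E) (c / d) 2
    rcases mul_eq_zero.mp hfac with h' | h'
    · exact ht (mem_bot.mpr ⟨c / d, (sub_eq_zero.mp h').symm⟩)
    · exact ht (mem_bot.mpr ⟨-(c / d), by rw [map_neg]; linear_combination -h'⟩)
  simpa using h

theorem eq_zero_of_sq_mul_mem_bot (ht : t ∉ (⊥ : IntermediateField F E))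
    (htm : t ^ 2 = algebraMap F E m) {e f : F} (hN : ¬IsSquare (e ^ 2 - f ^ 2 * m)) {x : E}
    (hx : x ∈ F⟮t⟯)
    (h : x ^ 2 * (algebraMap F E e + algebraMap F E f * t) ∈ (⊥ : IntermediateField F E)) :
    x = 0 := by
  obtain ⟨c, d, rfl⟩ := exists_eq_algebraMap_add_mul htm hx
  obtain ⟨q, hq⟩ := mem_bot.mp h
  set A := c ^ 2 + d ^ 2 * m
  set B := 2 * c * d
  have hcoeff : algebraMap F E (A * e + B * f * m) + algebraMap F E (A * f + B * e) * t =
      algebraMap F E q + algebraMap F E 0 * t := by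
    simp only [A, B, map_add, map_mul, map_pow, map_ofNat, map_zero, hq]
    linear_combination (-(algebraMap F E d ^ 2 * (algebraMap F E e + algebraMap F E f * t)) -
      2 * algebraMap F E c * algebraMap F E d * algebraMap F E f) * htm
  obtain ⟨hX, hY⟩ := (algebraMap_add_mul_eq_iff ht).mp hcoeff
  -- taking norms `N(c + d t) = c ^ 2 - d ^ 2 m` down to `F`: `q ^ 2 = N(x) ^ 2 N(e + f t)`
  have hnorm : q ^ 2 = (c ^ 2 - d ^ 2 * m) ^ 2 * (e ^ 2 - f ^ 2 * m) := by
    linear_combination (m * (A * f + B * e)) * hY - (A * e + B * f * m + q) * hX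
  by_cases hn : c ^ 2 - d ^ 2 * m = 0
  · obtain ⟨rfl, rfl⟩ := eq_zero_of_sq_sub_sq_mul_eq_zero ht htm hn
    simp
  · refine absurd ⟨q / (c ^ 2 - d ^ 2 * m), ?_⟩ hN
    rw [div_mul_div_comm, eq_div_iff (mul_ne_zero hn hn)]
    linear_combination -hnorm

theorem exists_sq_mem_bot_and_adjoin_simple_eq_of_finrank_eq_two [NeZero (2 : E)]
    {L : IntermediateField F E} (hL : Module.finrank F L = 2) :
    ∃ w : E, w ^ 2 ∈ (⊥ : IntermediateField F E) ∧ F⟮w⟯ = L := by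
  have : FiniteDimensional F L := Module.finite_of_finrank_eq_succ hL
  have hbot : ⊥ < L := bot_lt_iff_ne_bot.mpr fun h => by
    rw [h, IntermediateField.finrank_bot] at hL
    omega
  obtain ⟨x, hxL, hx⟩ := SetLike.exists_of_lt hbot
  have hint : IsIntegral F x := (IsIntegral.of_finite F (⟨x, hxL⟩ : L)).map L.val
  have hle : F⟮x⟯ ≤ L := adjoin_simple_le_iff.mpr hxL
  have hdeg2 : 2 ≤ (minpoly F x).natDegree :=
    (minpoly.two_le_natDegree_iff hint).mpr fun h => hx (mem_bot.mpr h)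
  have hxL : F⟮x⟯ = L := eq_of_le_of_finrank_le hle (by rwa [hL, adjoin.finrank hint])
  have hdeg : (minpoly F x).natDegree = 2 := by rw [← adjoin.finrank hint, hxL, hL]
  set p := (minpoly F x).coeff 1
  set q := (minpoly F x).coeff 0
  have hroot : x ^ 2 + algebraMap F E p * x + algebraMap F E q = 0 := by
    have h := minpoly.aeval F x
    have hlead : (minpoly F x).coeff 2 = 1 := hdeg ▸ (minpoly.monic hint).coeff_natDegree
    rw [aeval_eq_sum_range, hdeg] at h
    simp only [Finset.sum_range_succ, Finset.range_zero, Finset.sum_empty, hlead,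
      Algebra.smul_def, map_one] at h
    linear_combination h
  refine ⟨x + algebraMap F E (p / 2), mem_bot.mpr ⟨(p / 2) ^ 2 - q, ?_⟩, ?_⟩
  · have hp : algebraMap F E (p / 2) * 2 = algebraMap F E p := by
      rw [← map_ofNat (algebraMap F E) 2, ← map_mul, div_mul_cancel₀ _ (two_ne_zero_of_algebra E)]
    rw [map_sub, map_pow]
    linear_combination -hroot - x * hp
  · rw [adjoin_simple_add_algebraMap, hxL]

theorem adjoin_simple_ne_of_not_isSquare [NeZero (2 : E)] {x x' : E} {n n' : F}
    (hx : x ∉ (⊥ : IntermediateField F E)) (hxn : x ^ 2 = algebraMap F E n)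
    (hxn' : x' ^ 2 = algebraMap F E n') (hn' : ¬IsSquare n') (hnn' : ¬IsSquare (n * n')) :
    F⟮x⟯ ≠ F⟮x'⟯ := fun h =>
  (isSquare_or_isSquare_mul_of_mem_adjoin_simple hx hxn (h ▸ mem_adjoin_simple_self F x')
    hxn').elim hn' hnn'

end IntermediateField

theorem IsGalois.exists_finrank_eq_prime_le {k E : Type*} [Field k] [Field E] [Algebra k E]
    [FiniteDimensional k E] [IsGalois k E] {p n : ℕ} [Fact p.Prime]
    (hE : Module.finrank k E = p ^ n) {L : IntermediateField k E} (hL : L ≠ ⊥) :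
    ∃ M : IntermediateField k E, Module.finrank k M = p ∧ M ≤ L := by
  have hG : Nat.card Gal(E/k) = p ^ n := by rw [IsGalois.card_aut_eq_finrank, hE]
  obtain ⟨j, hj, hH⟩ :=
    (Nat.dvd_prime_pow Fact.out).mp (hG ▸ L.fixingSubgroup.card_subgroup_dvd_card)
  have hjn : j < n := by
    refine lt_of_le_of_ne hj fun hjn => hL ?_
    have htop : L.fixingSubgroup = ⊤ := Subgroup.eq_top_of_card_eq _ (by rw [hH, hG, hjn])
    rw [← IsGalois.fixedField_fixingSubgroup L, htop, IsGalois.fixedField_top]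
  obtain _ | n := n
  · omega
  obtain ⟨H, hHcard, hLH⟩ := Sylow.exists_subgroup_card_pow_prime_le p (m := n)
    (hG ▸ pow_dvd_pow p n.le_succ) _ hH (by omega)
  refine ⟨fixedField H, ?_, ?_⟩
  · have h := Module.finrank_mul_finrank k (fixedField H) E
    rw [finrank_fixedField_eq_card, hHcard, hE, pow_succ'] at h
    exact Nat.eq_of_mul_eq_mul_right (pow_pos (Fact.out : p.Prime).pos n) h
  · rw [← IsGalois.fixedField_fixingSubgroup L, IntermediateField.le_iff_le,
      fixingSubgroup_fixedField]
    exact hLH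

/-- `s = √m`, `t = √(e + f s)` and `t' = √(e - f s)`: square roots of two conjugates over `k⟮s⟯`,
whose product `e ^ 2 - f ^ 2 * m` is the norm of `t ^ 2`. -/
structure IsDihedralTower {k K : Type*} [Field k] [Field K] [Algebra k K] (m e f : k)
    (s t t' : K) : Prop where
  sq_s : s ^ 2 = algebraMap k K m
  sq_t : t ^ 2 = algebraMap k K e + algebraMap k K f * s
  sq_t' : t' ^ 2 = algebraMap k K e - algebraMap k K f * s
  not_isSquare : ¬IsSquare m
  not_isSquare_norm : ¬IsSquare (e ^ 2 - f ^ 2 * m)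
  not_isSquare_mul_norm : ¬IsSquare (m * (e ^ 2 - f ^ 2 * m))
  notMem_bot_t : t ∉ (⊥ : IntermediateField k⟮s⟯ K)
  adjoin_eq_top : k⟮s⟯⟮t⟯⟮t'⟯ = ⊤

namespace IsDihedralTower

variable {k K : Type*} [Field k] [Field K] [Algebra k K] {m e f : k} {s t t' : K}

theorem notMem_bot_s (h : IsDihedralTower m e f s t t') : s ∉ (⊥ : IntermediateField k K) :=
  notMem_bot_of_sq_eq h.sq_s h.not_isSquare

theorem sq_t_mem (h : IsDihedralTower m e f s t t') : t ^ 2 ∈ k⟮s⟯ :=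
  h.sq_t ▸ algebraMap_add_mul_mem_adjoin_simple e f

theorem sq_t'_eq (h : IsDihedralTower m e f s t t') :
    t' ^ 2 = algebraMap k K e + algebraMap k K (-f) * s := by
  rw [h.sq_t', map_neg, neg_mul, sub_eq_add_neg]

theorem sq_t'_mem (h : IsDihedralTower m e f s t t') : t' ^ 2 ∈ k⟮s⟯ :=
  h.sq_t'_eq ▸ algebraMap_add_mul_mem_adjoin_simple e (-f)

theorem sq_mul_eq (h : IsDihedralTower m e f s t t') :
    (t * t') ^ 2 = algebraMap k K (e ^ 2 - f ^ 2 * m) := by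
  rw [mul_pow, h.sq_t, h.sq_t', map_sub, map_mul, map_pow, map_pow, ← h.sq_s]
  ring

theorem sq_mul_mul_eq (h : IsDihedralTower m e f s t t') :
    (s * (t * t')) ^ 2 = algebraMap k K (m * (e ^ 2 - f ^ 2 * m)) := by
  rw [mul_pow, h.sq_s, h.sq_mul_eq, map_mul]

variable [NeZero (2 : K)]

theorem notMem_bot_t' (h : IsDihedralTower m e f s t t') :
    t' ∉ (⊥ : IntermediateField k⟮s⟯⟮t⟯ K) := by
  intro ht'
  rcases mem_bot_or_exists_eq_mul_of_sq_mem_bot h.notMem_bot_t (m := ⟨t ^ 2, h.sq_t_mem⟩) rfl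
      (mem_bot_iff_mem.mp ht') (mem_bot_iff_mem.mpr h.sq_t'_mem) with ht'k | ⟨δ, rfl⟩
  · have h0 := eq_zero_of_sq_mul_mem_bot h.notMem_bot_s h.sq_s h.not_isSquare_norm
      (mem_bot_iff_mem.mp ht'k) (by
        rw [← h.sq_t, ← mul_pow, mul_comm, h.sq_mul_eq]
        exact IntermediateField.algebraMap_mem _ _)
    exact h.not_isSquare_norm ⟨0, (algebraMap k K).injective (by simp [← h.sq_mul_eq, h0])⟩
  · have hδ : (δ * t ^ 2) ^ 2 = algebraMap k K (e ^ 2 - f ^ 2 * m) := by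
      rw [← h.sq_mul_eq]; simp only [IntermediateField.algebraMap_apply]; ring
    exact (isSquare_or_isSquare_mul_of_mem_adjoin_simple h.notMem_bot_s h.sq_s
      (mul_mem δ.2 h.sq_t_mem) hδ).elim h.not_isSquare_norm h.not_isSquare_mul_norm

theorem finrank_eq_eight (h : IsDihedralTower m e f s t t') : Module.finrank k K = 8 := by
  have h₁ : Module.finrank k k⟮s⟯ = 2 := finrank_adjoin_simple_eq_two h.notMem_bot_s h.sq_s
  have h₂ : Module.finrank k⟮s⟯ k⟮s⟯⟮t⟯ = 2 :=
    finrank_adjoin_simple_eq_two h.notMem_bot_t (m := ⟨t ^ 2, h.sq_t_mem⟩) rfl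
  have h₃ : Module.finrank k⟮s⟯⟮t⟯ K = 2 := by
    rw [← finrank_top', ← h.adjoin_eq_top]
    exact finrank_adjoin_simple_eq_two h.notMem_bot_t'
      (m := ⟨t' ^ 2, mem_of_mem_base _ h.sq_t'_mem⟩) rfl
  rw [← Module.finrank_mul_finrank k k⟮s⟯ K, ← Module.finrank_mul_finrank k⟮s⟯ k⟮s⟯⟮t⟯ K, h₁, h₂,
    h₃]

theorem mem_bot_or_exists_eq_mul_of_mem (h : IsDihedralTower m e f s t t') {w : K}
    (hw : w ∈ k⟮s⟯⟮t⟯) (hw2 : w ^ 2 ∈ (⊥ : IntermediateField k K)) :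
    w ∈ (⊥ : IntermediateField k K) ∨ ∃ d : k, w = algebraMap k K d * s := by
  rcases mem_bot_or_exists_eq_mul_of_sq_mem_bot h.notMem_bot_t (m := ⟨t ^ 2, h.sq_t_mem⟩) rfl hw
      (mem_bot_iff_mem.mpr (bot_le (a := k⟮s⟯) hw2)) with hwk | ⟨δ, rfl⟩
  · exact mem_bot_or_exists_eq_mul_of_sq_mem_bot h.notMem_bot_s h.sq_s (mem_bot_iff_mem.mp hwk)
      hw2
  · left
    have hδ : (δ : K) = 0 := eq_zero_of_sq_mul_mem_bot h.notMem_bot_s h.sq_s h.not_isSquare_norm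
      δ.2 (by rw [← h.sq_t, ← mul_pow]; simpa using hw2)
    simp [hδ]

theorem eq_zero_or_exists_mul_eq_mul (h : IsDihedralTower m e f s t t') {β : K}
    (hβ : β ∈ k⟮s⟯⟮t⟯) (hβt' : (β * t') ^ 2 ∈ (⊥ : IntermediateField k K)) :
    β = 0 ∨ ∃ d : k, β * t' = algebraMap k K d * (t * t') ∨
      β * t' = algebraMap k K d * (s * (t * t')) := by
  have hN0 : algebraMap k K (e ^ 2 - f ^ 2 * m) ≠ 0 :=
    (_root_.map_ne_zero _).mpr fun h0 => h.not_isSquare_norm (h0 ▸ IsSquare.zero)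
  have ht'0 : t' ^ 2 ≠ 0 := fun h0 => hN0 (by rw [← h.sq_mul_eq, mul_pow, h0, mul_zero])
  obtain ⟨q, hq⟩ := mem_bot.mp hβt'
  have hβ2 : β ^ 2 = algebraMap k K q / t' ^ 2 := by
    rw [hq, mul_pow, mul_div_cancel_right₀ _ ht'0]
  rcases mem_bot_or_exists_eq_mul_of_sq_mem_bot h.notMem_bot_t (m := ⟨t ^ 2, h.sq_t_mem⟩) rfl hβ
      (mem_bot_iff_mem.mpr (hβ2 ▸ div_mem (IntermediateField.algebraMap_mem _ q) h.sq_t'_mem))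
      with hβk | ⟨δ, rfl⟩
  · refine Or.inl (eq_zero_of_sq_mul_mem_bot h.notMem_bot_s h.sq_s ?_ (mem_bot_iff_mem.mp hβk)
      (by rw [← h.sq_t'_eq, ← mul_pow]; exact hβt'))
    rw [neg_sq]
    exact h.not_isSquare_norm
  · right
    have hδ2 : (δ : K) ^ 2 = algebraMap k K (q / (e ^ 2 - f ^ 2 * m)) := by
      rw [map_div₀, eq_div_iff hN0, ← h.sq_mul_eq, hq]
      simp only [IntermediateField.algebraMap_apply]
      ring
    rcases mem_bot_or_exists_eq_mul_of_sq_mem_bot h.notMem_bot_s h.sq_s δ.2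
        (hδ2 ▸ IntermediateField.algebraMap_mem _ _) with hδ | ⟨d, hd⟩
    · obtain ⟨c, hc⟩ := mem_bot.mp hδ
      exact ⟨c, Or.inl (by simp only [IntermediateField.algebraMap_apply, ← hc]; ring)⟩
    · exact ⟨d, Or.inr (by simp only [IntermediateField.algebraMap_apply, hd]; ring)⟩

theorem mem_bot_or_exists_eq_mul (h : IsDihedralTower m e f s t t') {w : K}
    (hw2 : w ^ 2 ∈ (⊥ : IntermediateField k K)) :
    w ∈ (⊥ : IntermediateField k K) ∨ ∃ d : k, w = algebraMap k K d * s ∨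
      w = algebraMap k K d * (t * t') ∨ w = algebraMap k K d * (s * (t * t')) := by
  have hw : w ∈ k⟮s⟯⟮t⟯⟮t'⟯ := h.adjoin_eq_top ▸ mem_top
  rcases IntermediateField.mem_bot_or_exists_eq_mul_of_sq_mem_bot h.notMem_bot_t'
      (m := ⟨t' ^ 2, mem_of_mem_base _ h.sq_t'_mem⟩) rfl hw
      (mem_bot_iff_mem.mpr (mem_of_mem_base _ (bot_le (a := k⟮s⟯) hw2))) with hw' | ⟨β, rfl⟩
  · rcases h.mem_bot_or_exists_eq_mul_of_mem (mem_bot_iff_mem.mp hw') hw2 with hwk | ⟨d, hd⟩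
    exacts [Or.inl hwk, Or.inr ⟨d, Or.inl hd⟩]
  · simp only [IntermediateField.algebraMap_apply] at hw2 ⊢
    rcases h.eq_zero_or_exists_mul_eq_mul β.2 hw2 with hβ | ⟨d, hd⟩
    · exact Or.inl (by simp [hβ])
    · exact Or.inr ⟨d, Or.inr hd⟩

theorem setOf_finrank_eq_two (h : IsDihedralTower m e f s t t') :
    {L : IntermediateField k K | Module.finrank k L = 2} =
      {k⟮s⟯, k⟮t * t'⟯, k⟮s * (t * t')⟯} := by
  ext L
  simp only [Set.mem_ofPred_eq, Set.mem_insert_iff, Set.mem_singleton_iff]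
  constructor
  · intro hL
    obtain ⟨w, hw2, rfl⟩ := exists_sq_mem_bot_and_adjoin_simple_eq_of_finrank_eq_two hL
    have hw : w ∉ (⊥ : IntermediateField k K) := fun hw => by
      rw [adjoin_simple_eq_bot_iff.mpr hw, IntermediateField.finrank_bot] at hL
      omega
    have hd0 {d : k} {x : K} (hd : w = algebraMap k K d * x) : d ≠ 0 := by
      rintro rfl
      exact hw (by simp [hd])
    rcases h.mem_bot_or_exists_eq_mul hw2 with hwk | ⟨d, hd | hd | hd⟩
    · exact absurd hwk hw
    all_goals rw [hd, adjoin_simple_algebraMap_mul (hd0 hd)]; simp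
  · rintro (rfl | rfl | rfl)
    · exact finrank_adjoin_simple_eq_two h.notMem_bot_s h.sq_s
    · exact finrank_adjoin_simple_eq_two (notMem_bot_of_sq_eq h.sq_mul_eq h.not_isSquare_norm)
        h.sq_mul_eq
    · exact finrank_adjoin_simple_eq_two
        (notMem_bot_of_sq_eq h.sq_mul_mul_eq h.not_isSquare_mul_norm) h.sq_mul_mul_eq

theorem adjoin_ne_adjoin (h : IsDihedralTower m e f s t t') :
    k⟮s⟯ ≠ k⟮t * t'⟯ ∧ k⟮s⟯ ≠ k⟮s * (t * t')⟯ ∧ k⟮t * t'⟯ ≠ k⟮s * (t * t')⟯ := by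
  have hm0 : m ≠ 0 := fun h0 => h.not_isSquare (h0 ▸ IsSquare.zero)
  have hN0 : e ^ 2 - f ^ 2 * m ≠ 0 := fun h0 => h.not_isSquare_norm (h0 ▸ IsSquare.zero)
  refine ⟨adjoin_simple_ne_of_not_isSquare h.notMem_bot_s h.sq_s h.sq_mul_eq
    h.not_isSquare_norm h.not_isSquare_mul_norm,
    adjoin_simple_ne_of_not_isSquare h.notMem_bot_s h.sq_s h.sq_mul_mul_eq
    h.not_isSquare_mul_norm fun hsq => h.not_isSquare_norm ?_,
    adjoin_simple_ne_of_not_isSquare (notMem_bot_of_sq_eq h.sq_mul_eq h.not_isSquare_norm)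
    h.sq_mul_eq h.sq_mul_mul_eq h.not_isSquare_mul_norm fun hsq => h.not_isSquare ?_⟩
  · have hN := hsq.div (IsSquare.mul_self m)
    rwa [show m * (m * (e ^ 2 - f ^ 2 * m)) / (m * m) = e ^ 2 - f ^ 2 * m by field_simp] at hN
  · have hm := hsq.div (IsSquare.mul_self (e ^ 2 - f ^ 2 * m))
    rwa [show (e ^ 2 - f ^ 2 * m) * (m * (e ^ 2 - f ^ 2 * m)) /
      ((e ^ 2 - f ^ 2 * m) * (e ^ 2 - f ^ 2 * m)) = m by field_simp] at hm

theorem le_of_ne_bot (h : IsDihedralTower m e f s t t') [IsGalois k K]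
    {L : IntermediateField k K} (hL : L ≠ ⊥) :
    k⟮s⟯ ≤ L ∨ k⟮t * t'⟯ ≤ L ∨ k⟮s * (t * t')⟯ ≤ L := by
  have : FiniteDimensional k K := Module.finite_of_finrank_eq_succ h.finrank_eq_eight
  obtain ⟨M, hM, hML⟩ := IsGalois.exists_finrank_eq_prime_le (p := 2) (n := 3)
    h.finrank_eq_eight hL
  have hM' : M ∈ {L : IntermediateField k K | Module.finrank k L = 2} := hM
  rw [h.setOf_finrank_eq_two] at hM'
  rcases hM' with rfl | rfl | rfl
  exacts [Or.inl hML, Or.inr (Or.inl hML), Or.inr (Or.inr hML)]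

end IsDihedralTower

namespace DihedralGroup

def toPerm (n : ℕ) : DihedralGroup n →* Equiv.Perm (ZMod n) where
  toFun
    | r i => Equiv.subRight i
    | sr i => Equiv.subLeft i
  map_one' := by ext x; simp [← r_zero]
  map_mul' g h := by
    rcases g with i | i <;> rcases h with j | j <;> ext x <;>
      simp only [r_mul_r, r_mul_sr, sr_mul_r, sr_mul_sr, Equiv.subRight_apply,
        Equiv.subLeft_apply, Equiv.Perm.coe_mul, Function.comp_apply] <;> ring

theorem toPerm_injective {n : ℕ} (hn : 2 < n) : Function.Injective (toPerm n) := by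
  rw [injective_iff_map_eq_one]
  rintro (i | i) h
  · have h0 := Equiv.ext_iff.mp h 0
    simp only [toPerm, MonoidHom.coe_mk, OneHom.coe_mk, Equiv.subRight_apply, zero_sub,
      Equiv.Perm.coe_one, id_eq, neg_eq_zero] at h0
    simp [h0, r_zero]
  · have h0 := Equiv.ext_iff.mp h 0
    have h1 := Equiv.ext_iff.mp h 1
    simp only [toPerm, MonoidHom.coe_mk, OneHom.coe_mk, Equiv.subLeft_apply, sub_zero,
      Equiv.Perm.coe_one, id_eq] at h0 h1
    subst h0
    have h2 : ((2 : ℕ) : ZMod n) = 0 := by push_cast; linear_combination -h1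
    rw [ZMod.natCast_eq_zero_iff] at h2
    exact absurd (Nat.le_of_dvd two_pos h2) (by omega)

end DihedralGroup

theorem nonempty_mulEquiv_dihedralGroup_four {G α : Type*} [Group G] [Finite α]
    (hα : Nat.card α = 4) (hG : Nat.card G = 8) {φ : G →* Equiv.Perm α}
    (hφ : Function.Injective φ) : Nonempty (G ≃* DihedralGroup 4) := by
  have : Finite G := Nat.finite_of_card_ne_zero (by omega)
  let e : Equiv.Perm α ≃* Equiv.Perm (ZMod 4) := (Finite.equivFinOfCardEq hα).permCongrHom
  have hS4 : Nat.card (Equiv.Perm (ZMod 4)) = 2 ^ 3 * 3 := by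
    rw [Nat.card_perm, Nat.card_zmod]; rfl
  -- `G` and `D₄` both embed in `S₄` as subgroups of order `8`, i.e. as Sylow `2`-subgroups,
  -- and Sylow subgroups are conjugate
  let sylow (H : Subgroup (Equiv.Perm (ZMod 4))) (hH : Nat.card H = 2 ^ 3) : Sylow 2 _ :=
    (IsPGroup.of_card hH).toSylow (by
      have := H.index_mul_card
      rw [hH, hS4] at this
      rw [show H.index = 3 by omega]
      decide)
  let f : G →* Equiv.Perm (ZMod 4) := e.toMonoidHom.comp φ
  have hf : Function.Injective f := e.injective.comp hφ
  let P := sylow f.range (by rw [← Nat.card_congr (MonoidHom.ofInjective hf).toEquiv, hG]; rfl)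
  have hD := DihedralGroup.toPerm_injective (n := 4) (by norm_num)
  let Q := sylow (DihedralGroup.toPerm 4).range (by
    rw [← Nat.card_congr (MonoidHom.ofInjective hD).toEquiv, DihedralGroup.nat_card]; rfl)
  exact ⟨(MonoidHom.ofInjective hf).trans ((P.equiv Q).trans (MonoidHom.ofInjective hD).symm)⟩

section Quadratic

variable {K : Type*} [Field K]

theorem eq_or_eq_of_sq_sub_mul_add_one [NeZero (2 : K)] {x y t : K} (ht : t ^ 2 = y ^ 2 - 4)
    (hx : x ^ 2 - y * x + 1 = 0) : x = (y + t) / 2 ∨ x = (y - t) / 2 := by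
  have h : (2 * x - (y + t)) * (2 * x - (y - t)) = 0 := by linear_combination 4 * hx - ht
  rcases mul_eq_zero.mp h with h | h
  exacts [Or.inl (by rw [eq_div_iff two_ne_zero]; linear_combination h),
    Or.inr (by rw [eq_div_iff two_ne_zero]; linear_combination h)]

theorem exists_sq_eq_sq_sub_four_of_splits {y : K} (hQ : (X ^ 2 - C y * X + 1 : K[X]).Splits) :
    ∃ t : K, t ^ 2 = y ^ 2 - 4 := by
  have hdeg : (X ^ 2 - C y * X + 1 : K[X]).degree = 2 := by compute_degree!
  obtain ⟨r, hr⟩ := hQ.exists_eval_eq_zero (by rw [hdeg]; decide)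
  simp only [eval_add, eval_sub, eval_pow, eval_mul, eval_X, eval_C, eval_one] at hr
  exact ⟨2 * r - y, by linear_combination 4 * hr⟩

end Quadratic

noncomputable def reciprocalQuartic {k : Type*} [Field k] (a b : k) : k[X] :=
  X ^ 4 + C a * X ^ 3 + C b * X ^ 2 + C a * X + 1

namespace reciprocalQuartic

variable {k K : Type*} [Field k] [Field K] [Algebra k K] {a b : k}

theorem natDegree_eq : (reciprocalQuartic a b).natDegree = 4 := by
  unfold reciprocalQuartic; compute_degree!

theorem monic : (reciprocalQuartic a b).Monic := by
  unfold reciprocalQuartic; monicity!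

theorem map_eq_mul {y : K} (hy : y ^ 2 + algebraMap k K a * y + (algebraMap k K b - 2) = 0) :
    (reciprocalQuartic a b).map (algebraMap k K) =
      (X ^ 2 - C y * X + 1) * (X ^ 2 - C (-algebraMap k K a - y) * X + 1) := by
  have hC := congrArg C hy
  simp only [C_add, C_sub, C_mul, C_pow, map_ofNat, C_0] at hC
  simp only [reciprocalQuartic, Polynomial.map_add, Polynomial.map_mul, Polynomial.map_pow, map_X,
    map_C, Polynomial.map_one, C_sub, C_neg]
  linear_combination X ^ 2 * hC

theorem exists_root_eq_half_add [NeZero (2 : K)]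
    (hsplit : ((reciprocalQuartic a b).map (algebraMap k K)).Splits) :
    ∃ y t t' : K, y ^ 2 + algebraMap k K a * y + (algebraMap k K b - 2) = 0 ∧
      t ^ 2 = y ^ 2 - 4 ∧ t' ^ 2 = (algebraMap k K a + y) ^ 2 - 4 ∧
      aeval ((y + t) / 2) (reciprocalQuartic a b) = 0 := by
  obtain ⟨r, hr⟩ := hsplit.exists_eval_eq_zero (by
    rw [degree_map, degree_eq_natDegree monic.ne_zero, natDegree_eq]; decide)
  simp only [reciprocalQuartic, eval_map_algebraMap, map_add, map_mul, map_pow, aeval_X, aeval_C,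
    map_one] at hr
  have hr0 : r ≠ 0 := by rintro rfl; simp at hr
  set y := r + r⁻¹
  have hy : y ^ 2 + algebraMap k K a * y + (algebraMap k K b - 2) = 0 := by
    have : r ^ 2 * (y ^ 2 + algebraMap k K a * y + (algebraMap k K b - 2)) = 0 := by
      simp only [y]; field_simp; linear_combination hr
    simpa [hr0] using this
  obtain ⟨t', ht'⟩ := exists_sq_eq_sq_sub_four_of_splits (hsplit.of_dvd (map_ne_zero monic.ne_zero)
    (map_eq_mul hy ▸ dvd_mul_left _ _))
  refine ⟨y, r - r⁻¹, t', hy, by simp only [y]; field_simp; ring, by rw [ht']; ring, ?_⟩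
  have hr' : (y + (r - r⁻¹)) / 2 = r := by rw [div_eq_iff two_ne_zero]; ring
  simpa [hr', reciprocalQuartic] using hr

theorem sq_two_mul_add_eq {y : K}
    (hy : y ^ 2 + algebraMap k K a * y + (algebraMap k K b - 2) = 0) :
    (2 * y + algebraMap k K a) ^ 2 = algebraMap k K (a ^ 2 - 4 * (b - 2)) := by
  simp only [map_sub, map_mul, map_pow, map_ofNat]
  linear_combination 4 * hy

theorem mem_adjoin_two_mul_add [NeZero (2 : K)] (y : K) (c : k) :
    y ∈ k⟮2 * y + algebraMap k K c⟯ := by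
  have h := div_mem (sub_mem (mem_adjoin_simple_self k (2 * y + algebraMap k K c))
    (IntermediateField.algebraMap_mem _ c)) (ofNat_mem _ 2)
  rwa [add_sub_cancel_right, mul_div_cancel_left₀ _ two_ne_zero] at h

theorem notMem_bot_of_irreducible [NeZero (2 : K)] (hirr : Irreducible (reciprocalQuartic a b))
    {y t : K}
    (hy : y ^ 2 + algebraMap k K a * y + (algebraMap k K b - 2) = 0)
    (hroot : aeval ((y + t) / 2) (reciprocalQuartic a b) = 0) :
    t ∉ (⊥ : IntermediateField k⟮2 * y + algebraMap k K a⟯ K) := by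
  intro ht
  have hs := sq_two_mul_add_eq hy
  have hr : (y + t) / 2 ∈ k⟮2 * y + algebraMap k K a⟯ :=
    div_mem (add_mem (mem_adjoin_two_mul_add y a) (mem_bot_iff_mem.mp ht)) (ofNat_mem _ 2)
  have hint : IsIntegral k ((y + t) / 2) := ⟨_, monic, hroot⟩
  have hr4 : Module.finrank k k⟮(y + t) / 2⟯ = 4 := by
    rw [adjoin.finrank hint, ← minpoly.eq_of_irreducible_of_monic hirr hroot monic, natDegree_eq]
  have : FiniteDimensional k k⟮2 * y + algebraMap k K a⟯ :=
    adjoin.finiteDimensional (isIntegral_of_sq_eq hs)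
  have hle := finrank_le_of_le_right (adjoin_simple_le_iff.mpr hr)
  have hs2 := finrank_adjoin_simple_le_two hs
  omega

theorem adjoin_adjoin_adjoin_eq_top [NeZero (2 : K)]
    [IsSplittingField k K (reciprocalQuartic a b)] {y t t' : K}
    (hy : y ^ 2 + algebraMap k K a * y + (algebraMap k K b - 2) = 0) (ht : t ^ 2 = y ^ 2 - 4)
    (ht' : t' ^ 2 = (algebraMap k K a + y) ^ 2 - 4) :
    k⟮2 * y + algebraMap k K a⟯⟮t⟯⟮t'⟯ = ⊤ := by
  set L := k⟮2 * y + algebraMap k K a⟯⟮t⟯⟮t'⟯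
  have hbase : ∀ x ∈ k⟮2 * y + algebraMap k K a⟯, x ∈ L :=
    fun x hx => mem_of_mem_base _ (mem_of_mem_base _ hx)
  have hyL := hbase y (mem_adjoin_two_mul_add y a)
  have hy'L : -algebraMap k K a - y ∈ L :=
    sub_mem (neg_mem (hbase _ (IntermediateField.algebraMap_mem _ a))) hyL
  have htL : t ∈ L := mem_of_mem_base _ (mem_adjoin_simple_self _ t)
  have ht'L : t' ∈ L := mem_adjoin_simple_self _ t'
  have hroots : ∀ x ∈ (reciprocalQuartic a b).rootSet K, x ∈ L := by
    intro x hx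
    have hx0 := (mem_rootSet.mp hx).2
    rw [← eval_map_algebraMap, map_eq_mul hy, eval_mul] at hx0
    simp only [eval_add, eval_sub, eval_pow, eval_mul, eval_X, eval_C, eval_one] at hx0
    rcases mul_eq_zero.mp hx0 with hx0 | hx0
    · rcases eq_or_eq_of_sq_sub_mul_add_one ht hx0 with rfl | rfl
      exacts [div_mem (add_mem hyL htL) (ofNat_mem _ 2), div_mem (sub_mem hyL htL) (ofNat_mem _ 2)]
    · rcases eq_or_eq_of_sq_sub_mul_add_one (by rw [ht']; ring) hx0 with rfl | rfl
      exacts [div_mem (add_mem hy'L ht'L) (ofNat_mem _ 2),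
        div_mem (sub_mem hy'L ht'L) (ofNat_mem _ 2)]
  rw [eq_top_iff]
  rintro x -
  have hx : x ∈ Algebra.adjoin k ((reciprocalQuartic a b).rootSet K) := by
    rw [IsSplittingField.adjoin_rootSet]; trivial
  induction hx using Algebra.adjoin_induction with
  | mem x hx => exact hroots x hx
  | algebraMap c => exact hbase _ (IntermediateField.algebraMap_mem _ c)
  | add x y _ _ hx hy => exact add_mem hx hy
  | mul x y _ _ hx hy => exact mul_mem hx hy

theorem norm_eq (h2 : (2 : k) ≠ 0) :
    ((a ^ 2 - 2 * b - 4) / 2) ^ 2 - (-a / 2) ^ 2 * (a ^ 2 - 4 * (b - 2)) =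
      (b + 2) ^ 2 - 4 * a ^ 2 := by
  field_simp
  ring

-- For roots `r`, `r'` of `P` with `y = r + r⁻¹` and `y' = r' + r'⁻¹ = -a - y`, the tower is
-- `s = 2 y + a = y - y'`, `t = r - r⁻¹`, `t' = r' - r'⁻¹`; `e` and `f` rewrite `y ^ 2 - 4` in `s`.
theorem exists_isDihedralTower [NeZero (2 : K)] [IsSplittingField k K (reciprocalQuartic a b)]
    (hirr : Irreducible (reciprocalQuartic a b)) (hΔ₁ : ¬IsSquare (a ^ 2 - 4 * (b - 2)))
    (hΔ₂ : ¬IsSquare ((b + 2) ^ 2 - 4 * a ^ 2))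
    (hΔ₁₂ : ¬IsSquare ((a ^ 2 - 4 * (b - 2)) * ((b + 2) ^ 2 - 4 * a ^ 2))) :
    ∃ s t t' : K,
      IsDihedralTower (a ^ 2 - 4 * (b - 2)) ((a ^ 2 - 2 * b - 4) / 2) (-a / 2) s t t' := by
  obtain ⟨y, t, t', hy, ht, ht', hroot⟩ :=
    exists_root_eq_half_add (IsSplittingField.splits K (reciprocalQuartic a b))
  have hN := norm_eq (a := a) (b := b) (two_ne_zero_of_algebra K)
  refine ⟨2 * y + algebraMap k K a, t, t', sq_two_mul_add_eq hy, ?_, ?_, hΔ₁, hN ▸ hΔ₂,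
    hN ▸ hΔ₁₂, notMem_bot_of_irreducible hirr hy hroot, adjoin_adjoin_adjoin_eq_top hy ht ht'⟩
  all_goals
    simp only [ht, ht', map_div₀, map_sub, map_mul, map_pow, map_ofNat, map_neg]
    field_simp
    linear_combination 2 * hy

end reciprocalQuartic

theorem Rat.not_isSquare_intCast {z : ℤ} (h : ¬∃ j : ℤ, z = j ^ 2) : ¬IsSquare (z : ℚ) := by
  rwa [Rat.isSquare_intCast_iff, isSquare_iff_exists_sq]

/-- If the reciprocal quartic `P = x⁴ + a x³ + b x² + a x + 1` is irreducible
over `ℚ` and none of `Δ₁`, `Δ₂`, `Δ₁Δ₂` is a perfect square, then: (i) the splitting field `K`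
of `P` has degree `8` over `ℚ` and the Galois group is dihedral of order `8`; (ii) `K` contains
exactly three quadratic subfields, namely `ℚ(√Δ₁)`, `ℚ(√Δ₂)` and `ℚ(√(Δ₁Δ₂))`; (iii) every
intermediate field `ℚ ⊊ L ⊆ K` contains one of these three quadratic fields. -/
theorem stmt_7 (a b : ℤ) (P : Polynomial ℚ)
    (hP : P = X ^ 4 + C (a : ℚ) * X ^ 3 + C (b : ℚ) * X ^ 2 + C (a : ℚ) * X + 1)
    (hirr : Irreducible P)
    (hΔ₁ : ¬ ∃ j : ℤ, a ^ 2 - 4 * (b - 2) = j ^ 2)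
    (hΔ₂ : ¬ ∃ j : ℤ, (b + 2) ^ 2 - 4 * a ^ 2 = j ^ 2)
    (hΔ₁₂ : ¬ ∃ j : ℤ, (a ^ 2 - 4 * (b - 2)) * ((b + 2) ^ 2 - 4 * a ^ 2) = j ^ 2) :
    Module.finrank ℚ P.SplittingField = 8 ∧
    Nonempty (P.Gal ≃* DihedralGroup 4) ∧
    ∃ s₁ s₂ s₃ : P.SplittingField,
      s₁ ^ 2 = ((a ^ 2 - 4 * (b - 2) : ℤ) : P.SplittingField) ∧
      s₂ ^ 2 = (((b + 2) ^ 2 - 4 * a ^ 2 : ℤ) : P.SplittingField) ∧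
      s₃ ^ 2 = (((a ^ 2 - 4 * (b - 2)) * ((b + 2) ^ 2 - 4 * a ^ 2) : ℤ) : P.SplittingField) ∧
      adjoin ℚ {s₁} ≠ adjoin ℚ {s₂} ∧
      adjoin ℚ {s₁} ≠ adjoin ℚ {s₃} ∧
      adjoin ℚ {s₂} ≠ adjoin ℚ {s₃} ∧
      {L : IntermediateField ℚ P.SplittingField | Module.finrank ℚ L = 2} =
        {adjoin ℚ {s₁}, adjoin ℚ {s₂}, adjoin ℚ {s₃}} ∧
      (∀ L : IntermediateField ℚ P.SplittingField, L ≠ ⊥ →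
        adjoin ℚ {s₁} ≤ L ∨ adjoin ℚ {s₂} ≤ L ∨ adjoin ℚ {s₃} ≤ L) := by
  obtain rfl : P = reciprocalQuartic (a : ℚ) b := hP
  have : IsSplittingField ℚ (reciprocalQuartic (a : ℚ) b).SplittingField (reciprocalQuartic a b) :=
    IsSplittingField.splittingField _
  obtain ⟨s, t, t', h⟩ := reciprocalQuartic.exists_isDihedralTower
    (K := (reciprocalQuartic (a : ℚ) b).SplittingField) hirr
    (by exact_mod_cast Rat.not_isSquare_intCast hΔ₁)
    (by exact_mod_cast Rat.not_isSquare_intCast hΔ₂)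
    (by exact_mod_cast Rat.not_isSquare_intCast hΔ₁₂)
  have hN := reciprocalQuartic.norm_eq (a := (a : ℚ)) (b := b) two_ne_zero
  have : IsGalois ℚ (reciprocalQuartic (a : ℚ) b).SplittingField :=
    IsGalois.of_separable_splitting_field hirr.separable
  have : Fact ((reciprocalQuartic (a : ℚ) b).map
      (algebraMap ℚ (reciprocalQuartic (a : ℚ) b).SplittingField)).Splits :=
    ⟨SplittingField.splits _⟩
  obtain ⟨h₁₂, h₁₃, h₂₃⟩ := h.adjoin_ne_adjoin
  refine ⟨h.finrank_eq_eight, ?_, s, t * t', s * (t * t'), ?_, ?_, ?_, h₁₂, h₁₃, h₂₃,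
    h.setOf_finrank_eq_two, fun L hL => h.le_of_ne_bot hL⟩
  · refine nonempty_mulEquiv_dihedralGroup_four ?_ ?_ (Gal.galActionHom_injective _
      (reciprocalQuartic (a : ℚ) b).SplittingField)
    · rw [Nat.card_eq_fintype_card]
      exact (card_rootSet_eq_natDegree hirr.separable (SplittingField.splits _)).trans
        reciprocalQuartic.natDegree_eq
    · rw [Gal.card_of_separable hirr.separable, h.finrank_eq_eight]
  · simp [h.sq_s]
  · simp [h.sq_mul_eq, hN]
  · simp [h.sq_mul_mul_eq, hN]
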